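/- Fix positive integers n, m, real n×n matrices A and L with L symmetric, a real n×m matrix B, reals q and r with r > 0, T > 0, and a continuous function x̄ : [0,T] → ℝⁿ. Let Γ : [0,T] → (n×n real matrices), β : [0,T] → ℝⁿ, δ : [0,T] → ℝ be continuously differentiable with Γ(t) symmetric for all t and satisfying on [0,T]: Γ' = (1/r)·Γ B Bᵀ Γ − Γ A − Aᵀ Γ − q·I, β' = ((1/r)·Γ B Bᵀ − Aᵀ) β − q·L x̄, δ' = (1/(2r))·⟪β, B Bᵀ β⟫, with terminal conditions Γ(T) = M·I, β(T) = −M·p, δ(T) = (M/2)‖p‖² for some real M ≥ 0 and p ∈ ℝⁿ. Then for every continuous u : [0,T] → ℝᵐ and every continuously differentiable x : [0,T] → ℝⁿ with x' = A x + B u on [0,T] and x(0) = x⁰, one has: ∫₀ᵀ [ (q/2)‖x(t)‖² + q⟪x̄(t), L x(t)⟫ + (r/2)‖u(t)‖² ] dt + (M/2)‖x(T) − p‖² = ½⟪x⁰, Γ(0) x⁰⟫ + ⟪β(0), x⁰⟫ + δ(0) + (r/2)∫₀ᵀ ‖u(t) + (1/r)·Bᵀ(Γ(t) x(t) + β(t))‖²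 dt. -/

import Mathlib

/-!
Along any trajectory, the quadratic value `V(t) = ½⟪x, Γ x⟫ + ⟪β, x⟫ + δ` changes at rate
`(r/2)‖u + (1/r) Bᵀ(Γx + β)‖² - (running cost)`: after substituting the Riccati equations for
`Γ, β, δ` and the dynamics for `x`, the terms of `V'` outside the running cost are exactly those
of `(r/2)‖u + (1/r) Bᵀ(Γx + β)‖² - (r/2)‖u‖²`. Integrating over `[0, T]`, and noting that the
terminal conditions make `V(T)` the terminal cost `(M/2)‖x(T) - p‖²`, gives the identity.
-/

open scoped RealInnerProductSpace Matrix

attribute [local instance] Matrix.normedAddCommGroup Matrix.normedSpace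

open Matrix

theorem mul_norm_add_one_div_smul_sq {F : Type*} [NormedAddCommGroup F] [InnerProductSpace ℝ F]
    {r : ℝ} (hr : r ≠ 0) (u w : F) :
    r / 2 * ‖u + (1 / r) • w‖ ^ 2 = r / 2 * ‖u‖ ^ 2 + ⟪w, u⟫ + 1 / (2 * r) * ‖w‖ ^ 2 := by
  rw [norm_add_sq_real, norm_smul, real_inner_smul_right, real_inner_comm, mul_pow,
    Real.norm_eq_abs, sq_abs]
  field_simp

namespace Matrix

variable {ι κ : Type*} [Fintype ι] [DecidableEq ι] [Fintype κ]

theorem inner_toEuclideanLin_transpose [DecidableEq κ] (N : Matrix ι κ ℝ)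
    (v : EuclideanSpace ℝ ι) (w : EuclideanSpace ℝ κ) :
    ⟪toEuclideanLin Nᵀ v, w⟫ = ⟪v, toEuclideanLin N w⟫ := by
  rw [← conjTranspose_eq_transpose_of_trivial, toEuclideanLin_conjTranspose_eq_adjoint,
    LinearMap.adjoint_inner_left]

theorem inner_toEuclideanLin_left [DecidableEq κ] (N : Matrix κ ι ℝ)
    (v : EuclideanSpace ℝ ι) (w : EuclideanSpace ℝ κ) :
    ⟪toEuclideanLin N v, w⟫ = ⟪v, toEuclideanLin Nᵀ w⟫ := by
  rw [← inner_toEuclideanLin_transpose, transpose_transpose]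

theorem inner_toEuclideanLin_mul_transpose_self [DecidableEq κ] (N : Matrix ι κ ℝ)
    (v : EuclideanSpace ℝ ι) : ⟪v, toEuclideanLin (N * Nᵀ) v⟫ = ‖toEuclideanLin Nᵀ v‖ ^ 2 := by
  rw [toLpLin_mul_same, LinearMap.comp_apply, ← inner_toEuclideanLin_transpose,
    real_inner_self_eq_norm_sq]

theorem IsSymm.inner_toEuclideanLin {G : Matrix ι ι ℝ} (hG : G.IsSymm)
    (v w : EuclideanSpace ℝ ι) : ⟪toEuclideanLin G v, w⟫ = ⟪v, toEuclideanLin G w⟫ :=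
  isSymmetric_toEuclideanLin_iff.mpr (isHermitian_iff_isSymm.mpr hG) v w

/-- Unlike `Matrix.toEuclideanCLM`, this is continuous linear in the matrix, so the chain rule
applies to `t ↦ toEuclideanLin (Γ t)`. -/
noncomputable def toEuclideanLinCLM :
    Matrix κ ι ℝ →L[ℝ] EuclideanSpace ℝ ι →L[ℝ] EuclideanSpace ℝ κ :=
  LinearMap.toContinuousLinearMap
    (LinearMap.toContinuousLinearMap.toLinearMap ∘ₗ toEuclideanLin.toLinearMap)

end Matrix

section Calculus

variable {ι κ : Type*} [Fintype ι] [DecidableEq ι] [Fintype κ]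

theorem HasDerivAt.toEuclideanLin_apply {Γ : ℝ → Matrix κ ι ℝ} {x : ℝ → EuclideanSpace ℝ ι}
    {Γ' : Matrix κ ι ℝ} {x' : EuclideanSpace ℝ ι} {t : ℝ}
    (hΓ : HasDerivAt Γ Γ' t) (hx : HasDerivAt x x' t) :
    HasDerivAt (fun s ↦ toEuclideanLin (Γ s) (x s))
      (toEuclideanLin Γ' (x t) + toEuclideanLin (Γ t) x') t := by
  have hΓ' : HasDerivAt (fun s ↦ toEuclideanLinCLM (Γ s)) (toEuclideanLinCLM Γ') t :=
    (toEuclideanLinCLM (ι := ι) (κ := κ)).hasFDerivAt.comp_hasDerivAt t hΓ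
  exact hΓ'.clm_apply hx

theorem ContinuousOn.toEuclideanLin_apply {Γ : ℝ → Matrix κ ι ℝ} {x : ℝ → EuclideanSpace ℝ ι}
    {s : Set ℝ} (hΓ : ContinuousOn Γ s) (hx : ContinuousOn x s) :
    ContinuousOn (fun t ↦ toEuclideanLin (Γ t) (x t)) s :=
  (toEuclideanLinCLM.continuous.comp_continuousOn hΓ).clm_apply hx

end Calculus

section Riccati

variable {ι κ : Type*} [Fintype ι] [DecidableEq ι] [Fintype κ] [DecidableEq κ]

theorem inner_riccati_rhs (A G : Matrix ι ι ℝ) (B : Matrix ι κ ℝ) (hG : G.IsSymm) (q r : ℝ)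
    (X : EuclideanSpace ℝ ι) :
    ⟪X, toEuclideanLin ((1 / r) • (G * B * Bᵀ * G) - G * A - Aᵀ * G - q • 1) X⟫ =
      1 / r * ‖toEuclideanLin Bᵀ (toEuclideanLin G X)‖ ^ 2 -
        2 * ⟪toEuclideanLin G X, toEuclideanLin A X⟫ - q * ‖X‖ ^ 2 := by
  have hGB : G * B * Bᵀ * G = G * B * (G * B)ᵀ := by
    rw [transpose_mul, hG.eq, Matrix.mul_assoc]
  have hGA : ⟪X, toEuclideanLin (G * A) X⟫ = ⟪toEuclideanLin G X, toEuclideanLin A X⟫ := by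
    rw [toLpLin_mul_same, LinearMap.comp_apply, hG.inner_toEuclideanLin]
  have hAG : ⟪X, toEuclideanLin (Aᵀ * G) X⟫ = ⟪toEuclideanLin G X, toEuclideanLin A X⟫ := by
    rw [toLpLin_mul_same, LinearMap.comp_apply, real_inner_comm,
      inner_toEuclideanLin_transpose]
  simp only [map_sub, map_smul, LinearMap.sub_apply, LinearMap.smul_apply, inner_sub_right,
    real_inner_smul_right, hGB, inner_toEuclideanLin_mul_transpose_self, hGA, hAG,
    toLpLin_one, LinearMap.id_apply, real_inner_self_eq_norm_sq]
  rw [transpose_mul, hG.eq, toLpLin_mul_same, LinearMap.comp_apply]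
  ring

theorem inner_costate_rhs (A G L : Matrix ι ι ℝ) (B : Matrix ι κ ℝ) (hG : G.IsSymm)
    (hL : L.IsSymm) (q r : ℝ) (b xb X : EuclideanSpace ℝ ι) :
    ⟪toEuclideanLin ((1 / r) • (G * B * Bᵀ) - Aᵀ) b - q • toEuclideanLin L xb, X⟫ =
      1 / r * ⟪toEuclideanLin Bᵀ b, toEuclideanLin Bᵀ (toEuclideanLin G X)⟫ -
        ⟪b, toEuclideanLin A X⟫ - q * ⟪xb, toEuclideanLin L X⟫ := by
  simp only [map_sub, map_smul, toLpLin_mul_same, LinearMap.sub_apply, LinearMap.smul_apply,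
    LinearMap.comp_apply, inner_sub_left, real_inner_smul_left]
  rw [hG.inner_toEuclideanLin, inner_toEuclideanLin_left B, inner_toEuclideanLin_transpose A,
    hL.inner_toEuclideanLin]

theorem riccati_completion_of_squares (A G L : Matrix ι ι ℝ) (B : Matrix ι κ ℝ)
    (hG : G.IsSymm) (hL : L.IsSymm) {q r : ℝ} (hr : r ≠ 0) (X xb b : EuclideanSpace ℝ ι)
    (U : EuclideanSpace ℝ κ) :
    1 / 2 * ⟪X, toEuclideanLin ((1 / r) • (G * B * Bᵀ * G) - G * A - Aᵀ * G - q • 1) X⟫ +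
        ⟪toEuclideanLin G X, toEuclideanLin A X + toEuclideanLin B U⟫ +
        ⟪toEuclideanLin ((1 / r) • (G * B * Bᵀ) - Aᵀ) b - q • toEuclideanLin L xb, X⟫ +
        ⟪b, toEuclideanLin A X + toEuclideanLin B U⟫ +
        1 / (2 * r) * ⟪b, toEuclideanLin (B * Bᵀ) b⟫ =
      r / 2 * ‖U + (1 / r) • toEuclideanLin Bᵀ (toEuclideanLin G X + b)‖ ^ 2 -
        (q / 2 * ‖X‖ ^ 2 + q * ⟪xb, toEuclideanLin L X⟫ + r / 2 * ‖U‖ ^ 2) := by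
  rw [inner_riccati_rhs A G B hG, inner_costate_rhs A G L B hG hL,
    inner_toEuclideanLin_mul_transpose_self, mul_norm_add_one_div_smul_sq hr, map_add,
    norm_add_sq_real, inner_add_left, inner_add_right, inner_add_right,
    ← inner_toEuclideanLin_transpose B, ← inner_toEuclideanLin_transpose B,
    real_inner_comm (toEuclideanLin Bᵀ b)]
  ring

end Riccati

section QuadraticValue

variable {ι : Type*} [Fintype ι] [DecidableEq ι]

noncomputable def quadraticValue (G : Matrix ι ι ℝ) (b : EuclideanSpace ℝ ι) (d : ℝ)
    (X : EuclideanSpace ℝ ι) : ℝ :=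
  1 / 2 * ⟪X, toEuclideanLin G X⟫ + ⟪b, X⟫ + d

theorem quadraticValue_smul_one (M : ℝ) (p X : EuclideanSpace ℝ ι) :
    quadraticValue (M • 1) ((-M) • p) (M / 2 * ‖p‖ ^ 2) X = M / 2 * ‖X - p‖ ^ 2 := by
  rw [quadraticValue, map_smul, toLpLin_one, LinearMap.smul_apply, LinearMap.id_apply,
    norm_sub_sq_real, real_inner_smul_left, real_inner_smul_right, real_inner_self_eq_norm_sq,
    real_inner_comm p]
  ring

theorem HasDerivAt.quadraticValue {Γ : ℝ → Matrix ι ι ℝ} {β x : ℝ → EuclideanSpace ℝ ι}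
    {δ : ℝ → ℝ} {Γ' : Matrix ι ι ℝ} {β' x' : EuclideanSpace ℝ ι} {δ' t : ℝ}
    (hΓs : (Γ t).IsSymm) (hΓ : HasDerivAt Γ Γ' t) (hβ : HasDerivAt β β' t)
    (hδ : HasDerivAt δ δ' t) (hx : HasDerivAt x x' t) :
    HasDerivAt (fun s ↦ _root_.quadraticValue (Γ s) (β s) (δ s) (x s))
      (1 / 2 * ⟪x t, toEuclideanLin Γ' (x t)⟫ + ⟪toEuclideanLin (Γ t) (x t), x'⟫ +
        ⟪β', x t⟫ + ⟪β t, x'⟫ + δ') t := by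
  refine ((((hx.inner ℝ (hΓ.toEuclideanLin_apply hx)).const_mul (1 / 2)).add
    (hβ.inner ℝ hx)).add hδ).congr_deriv ?_
  rw [inner_add_right, ← hΓs.inner_toEuclideanLin (x t) x',
    real_inner_comm (toEuclideanLin (Γ t) (x t)) x']
  ring

end QuadraticValue

theorem integrated_completion_of_squares_general (n m : ℕ)
    (A L : Matrix (Fin n) (Fin n) ℝ) (hL : L.IsSymm)
    (B : Matrix (Fin n) (Fin m) ℝ) (q r : ℝ) (hr : 0 < r)
    (T : ℝ) (hT : 0 < T)
    (xbar : ℝ → EuclideanSpace ℝ (Fin n)) (hxbar : Continuous xbar)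
    (Γ : ℝ → Matrix (Fin n) (Fin n) ℝ) (β : ℝ → EuclideanSpace ℝ (Fin n)) (δ : ℝ → ℝ)
    (hΓs : ∀ t : ℝ, (Γ t).IsSymm)
    (hΓ : ∀ t ∈ Set.Icc (0 : ℝ) T, HasDerivAt Γ
      ((1 / r) • (Γ t * B * Bᵀ * Γ t) - Γ t * A - Aᵀ * Γ t -
        q • (1 : Matrix (Fin n) (Fin n) ℝ)) t)
    (hβ : ∀ t ∈ Set.Icc (0 : ℝ) T, HasDerivAt β
      (Matrix.toEuclideanLin ((1 / r) • (Γ t * B * Bᵀ) - Aᵀ) (β t) -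
        q • Matrix.toEuclideanLin L (xbar t)) t)
    (hδ : ∀ t ∈ Set.Icc (0 : ℝ) T, HasDerivAt δ
      ((1 / (2 * r)) * ⟪β t, Matrix.toEuclideanLin (B * Bᵀ) (β t)⟫) t)
    (M : ℝ) (p : EuclideanSpace ℝ (Fin n))
    (hΓT : Γ T = M • (1 : Matrix (Fin n) (Fin n) ℝ))
    (hβT : β T = (-M) • p)
    (hδT : δ T = (M / 2) * ‖p‖ ^ 2)
    (u : ℝ → EuclideanSpace ℝ (Fin m)) (hu : Continuous u)
    (x : ℝ → EuclideanSpace ℝ (Fin n)) (x0 : EuclideanSpace ℝ (Fin n))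
    (hx : ∀ t ∈ Set.Icc (0 : ℝ) T, HasDerivAt x
      (Matrix.toEuclideanLin A (x t) + Matrix.toEuclideanLin B (u t)) t)
    (hx0 : x 0 = x0) :
    (∫ t in (0 : ℝ)..T, ((q / 2) * ‖x t‖ ^ 2 +
        q * ⟪xbar t, Matrix.toEuclideanLin L (x t)⟫ + (r / 2) * ‖u t‖ ^ 2)) +
      (M / 2) * ‖x T - p‖ ^ 2 =
    (1 / 2) * ⟪x0, Matrix.toEuclideanLin (Γ 0) x0⟫ + ⟪β 0, x0⟫ + δ 0 +
      (r / 2) * ∫ t in (0 : ℝ)..T,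
        ‖u t + (1 / r) •
          Matrix.toEuclideanLin Bᵀ (Matrix.toEuclideanLin (Γ t) (x t) + β t)‖ ^ 2 := by
  rw [← Set.uIcc_of_le hT.le] at hΓ hβ hδ hx
  set running := fun t ↦ (q / 2) * ‖x t‖ ^ 2 +
    q * ⟪xbar t, Matrix.toEuclideanLin L (x t)⟫ + (r / 2) * ‖u t‖ ^ 2
  set excess := fun t ↦ ‖u t + (1 / r) •
    Matrix.toEuclideanLin Bᵀ (Matrix.toEuclideanLin (Γ t) (x t) + β t)‖ ^ 2
  have hxc : ContinuousOn x (Set.uIcc 0 T) := fun t ht ↦ (hx t ht).continuousAt.continuousWithinAt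
  have hβc : ContinuousOn β (Set.uIcc 0 T) := fun t ht ↦ (hβ t ht).continuousAt.continuousWithinAt
  have hΓxc := ContinuousOn.toEuclideanLin_apply
    (fun t ht ↦ (hΓ t ht).continuousAt.continuousWithinAt) hxc
  have hLc := (toEuclideanLin L).continuous_of_finiteDimensional
  have hBc := (toEuclideanLin Bᵀ).continuous_of_finiteDimensional
  have hrunning : ContinuousOn running (Set.uIcc 0 T) := by fun_prop
  have hexcess : ContinuousOn excess (Set.uIcc 0 T) := by fun_prop
  have hV := intervalIntegral.integral_eq_sub_of_hasDerivAt
    (f := fun t ↦ quadraticValue (Γ t) (β t) (δ t) (x t))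
    (f' := fun t ↦ r / 2 * excess t - running t)
    (fun t ht ↦ by
      rw [← riccati_completion_of_squares A (Γ t) L B (hΓs t) hL hr.ne' (x t) (xbar t) (β t)]
      exact (hΓ t ht).quadraticValue (hΓs t) (hβ t ht) (hδ t ht) (hx t ht))
    ((continuousOn_const.mul hexcess).sub hrunning).intervalIntegrable
  rw [intervalIntegral.integral_sub (hexcess.intervalIntegrable.const_mul _)
    hrunning.intervalIntegrable, intervalIntegral.integral_const_mul, hΓT, hβT, hδT,
    quadraticValue_smul_one, hx0, quadraticValue] at hV
  linarith

/-- Integrated completion-of-squares identity: for the LQ tracking problem toward a single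
destination `p` with terminal weight `M`, the cost of any admissible control equals the
quadratic value `½⟪x⁰, Γ(0)x⁰⟫ + ⟪β(0), x⁰⟫ + δ(0)` plus the nonnegative excess
`(r/2)∫₀ᵀ ‖u + (1/r)Bᵀ(Γx + β)‖² dt`. -/
theorem integrated_completion_of_squares (n m : ℕ) (hn : 0 < n) (hm : 0 < m)
    (A L : Matrix (Fin n) (Fin n) ℝ) (hL : L.IsSymm)
    (B : Matrix (Fin n) (Fin m) ℝ) (q r : ℝ) (hr : 0 < r)
    (T : ℝ) (hT : 0 < T)
    (xbar : ℝ → EuclideanSpace ℝ (Fin n)) (hxbar : Continuous xbar)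
    (Γ : ℝ → Matrix (Fin n) (Fin n) ℝ) (β : ℝ → EuclideanSpace ℝ (Fin n)) (δ : ℝ → ℝ)
    (hΓs : ∀ t : ℝ, (Γ t).IsSymm)
    (hΓ : ∀ t ∈ Set.Icc (0 : ℝ) T, HasDerivAt Γ
      ((1 / r) • (Γ t * B * Bᵀ * Γ t) - Γ t * A - Aᵀ * Γ t -
        q • (1 : Matrix (Fin n) (Fin n) ℝ)) t)
    (hβ : ∀ t ∈ Set.Icc (0 : ℝ) T, HasDerivAt β
      (Matrix.toEuclideanLin ((1 / r) • (Γ t * B * Bᵀ) - Aᵀ) (β t) -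
        q • Matrix.toEuclideanLin L (xbar t)) t)
    (hδ : ∀ t ∈ Set.Icc (0 : ℝ) T, HasDerivAt δ
      ((1 / (2 * r)) * ⟪β t, Matrix.toEuclideanLin (B * Bᵀ) (β t)⟫) t)
    (M : ℝ) (hM : 0 ≤ M) (p : EuclideanSpace ℝ (Fin n))
    (hΓT : Γ T = M • (1 : Matrix (Fin n) (Fin n) ℝ))
    (hβT : β T = (-M) • p)
    (hδT : δ T = (M / 2) * ‖p‖ ^ 2)
    (u : ℝ → EuclideanSpace ℝ (Fin m)) (hu : Continuous u)
    (x : ℝ → EuclideanSpace ℝ (Fin n)) (x0 : EuclideanSpace ℝ (Fin n))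
    (hx : ∀ t ∈ Set.Icc (0 : ℝ) T, HasDerivAt x
      (Matrix.toEuclideanLin A (x t) + Matrix.toEuclideanLin B (u t)) t)
    (hx0 : x 0 = x0) :
    (∫ t in (0 : ℝ)..T, ((q / 2) * ‖x t‖ ^ 2 +
        q * ⟪xbar t, Matrix.toEuclideanLin L (x t)⟫ + (r / 2) * ‖u t‖ ^ 2)) +
      (M / 2) * ‖x T - p‖ ^ 2 =
    (1 / 2) * ⟪x0, Matrix.toEuclideanLin (Γ 0) x0⟫ + ⟪β 0, x0⟫ + δ 0 +
      (r / 2) * ∫ t in (0 : ℝ)..T,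
        ‖u t + (1 / r) •
          Matrix.toEuclideanLin Bᵀ (Matrix.toEuclideanLin (Γ t) (x t) + β t)‖ ^ 2 :=
  integrated_completion_of_squares_general n m A L hL B q r hr T hT xbar hxbar Γ β δ hΓs hΓ hβ hδ M
    p hΓT hβT hδT u hu x x0 hx hx0
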